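/- Any infinite binary sequence starting with 0 and containing no two consecutive 1's admits a unique decomposition as a concatenation of blocks from {0 (not followed by 1), 01}; equivalently, there exists a unique infinite binary sequence y with H(y) = x, where H is the Fibonacci substitution. -/

import Mathlib

/-!
Both `H 0 = 01` and `H 1 = 0` begin with `0`, and the letter after that `0` is `1` exactly when
the block is `01`. So in `x = H y` the block boundaries are forced: if the current block starts
at `p`, then `y` has a `0` there iff `x (p + 1) = 1`, and the next block starts at `p + 2` or
`p + 1` accordingly. Reading `x` this way recovers `y`, whence uniqueness. Conversely, for `x`
starting with `0` and without `11`, every boundary found this way carries a `0`, so the blocks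
read off do tile `x`.
-/

/-- Fibonacci substitution on finite words: H(0)=01, H(1)=0 (0 ↦ `false`, 1 ↦ `true`). -/
def Hword : List Bool → List Bool
  | [] => []
  | false :: t => false :: true :: Hword t
  | true :: t => false :: Hword t

/-- Paper-indexed Fibonacci numbers, shifted by 2: `fibP k = F_{k-2}`, so
`fibP 0 = F_{-2} = 1`, `fibP 1 = F_{-1} = 0`, `fibP 2 = F_0 = 1`, `fibP 3 = F_1 = 1`, … -/
def fibP : ℕ → ℕ
  | 0 => 1
  | 1 => 0
  | n + 2 => fibP (n + 1) + fibP n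

/-- Fibonacci substitution on infinite binary sequences. -/
def Hseq (x : ℕ → Bool) : ℕ → Bool :=
  fun n => (Hword ((List.range (n + 1)).map x)).getD n false

/-- The left shift on infinite binary sequences. -/
def shift (x : ℕ → Bool) : ℕ → Bool := fun n => x (n + 1)

theorem Hword_append (l m : List Bool) : Hword (l ++ m) = Hword l ++ Hword m := by
  induction l with
  | nil => rfl
  | cons a t ih => cases a <;> simp [Hword, ih]

theorem length_le_length_Hword (l : List Bool) : l.length ≤ (Hword l).length := by
  induction l with
  | nil => simp [Hword]
  | cons a t ih => cases a <;> simp [Hword] <;> omega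

section Prefixes

variable (y : ℕ → Bool)

def seqPrefix (m : ℕ) : List Bool := (List.range m).map y

@[simp]
theorem length_seqPrefix (m : ℕ) : (seqPrefix y m).length = m := by
  simp [seqPrefix]

theorem seqPrefix_succ (m : ℕ) : seqPrefix y (m + 1) = seqPrefix y m ++ [y m] := by
  simp [seqPrefix, List.range_succ]

theorem Hseq_eq_getD (n : ℕ) : Hseq y n = (Hword (seqPrefix y (n + 1))).getD n false := rfl

theorem length_Hword_seqPrefix_succ (n : ℕ) :
    (Hword (seqPrefix y (n + 1))).length
      = (Hword (seqPrefix y n)).length + (if y n then 1 else 2) := by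
  rw [seqPrefix_succ, Hword_append]
  cases y n <;> simp [Hword]

variable {y}

theorem Hword_seqPrefix_prefix {a b : ℕ} (h : a ≤ b) :
    Hword (seqPrefix y a) <+: Hword (seqPrefix y b) := by
  have htake : seqPrefix y a = (seqPrefix y b).take a := by
    simp [seqPrefix, ← List.map_take, List.take_range, Nat.min_eq_left h]
  rw [← List.take_append_drop a (seqPrefix y b), Hword_append, ← htake]
  exact List.prefix_append _ _

theorem getD_Hword_seqPrefix {m i : ℕ} (hi : i < (Hword (seqPrefix y m)).length) :
    (Hword (seqPrefix y m)).getD i false = Hseq y i := by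
  have hi' : i < (Hword (seqPrefix y (i + 1))).length :=
    (length_le_length_Hword _).trans_lt' (by simp)
  rw [Hseq_eq_getD]
  rcases le_total m (i + 1) with hm | hm
  · obtain ⟨t, ht⟩ := Hword_seqPrefix_prefix (y := y) hm
    rw [← ht, List.getD_append _ _ _ _ hi]
  · obtain ⟨t, ht⟩ := Hword_seqPrefix_prefix (y := y) hm
    rw [← ht, List.getD_append _ _ _ _ hi']

theorem Hseq_length_Hword_seqPrefix (n : ℕ) :
    Hseq y (Hword (seqPrefix y n)).length = false := by
  have hlt : (Hword (seqPrefix y n)).length < (Hword (seqPrefix y (n + 1))).length := by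
    rw [length_Hword_seqPrefix_succ]; split <;> omega
  rw [← getD_Hword_seqPrefix hlt, seqPrefix_succ, Hword_append,
    List.getD_append_right _ _ _ _ le_rfl, Nat.sub_self]
  cases y n <;> rfl

theorem Hseq_length_Hword_seqPrefix_add_one (n : ℕ) :
    Hseq y ((Hword (seqPrefix y n)).length + 1) = !y n := by
  cases hy : y n with
  | false =>
    have hlt : (Hword (seqPrefix y n)).length + 1 < (Hword (seqPrefix y (n + 1))).length := by
      rw [length_Hword_seqPrefix_succ, hy]; simp
    rw [← getD_Hword_seqPrefix hlt, seqPrefix_succ, Hword_append,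
      List.getD_append_right _ _ _ _ (by omega), hy]
    simp [Hword]
  | true =>
    have hlen : (Hword (seqPrefix y (n + 1))).length = (Hword (seqPrefix y n)).length + 1 := by
      rw [length_Hword_seqPrefix_succ, hy]; rfl
    rw [← hlen, Hseq_length_Hword_seqPrefix]; rfl

end Prefixes

/-- Start of the `n`-th block when `x` is cut into blocks `01` and `0`. -/
def blockStart (x : ℕ → Bool) : ℕ → ℕ
  | 0 => 0
  | n + 1 => blockStart x n + if x (blockStart x n + 1) then 2 else 1

def Hpreimage (x : ℕ → Bool) (n : ℕ) : Bool := !x (blockStart x n + 1)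

theorem length_Hword_seqPrefix_eq_blockStart (y : ℕ → Bool) (n : ℕ) :
    (Hword (seqPrefix y n)).length = blockStart (Hseq y) n := by
  induction n with
  | zero => rfl
  | succ n ih =>
    rw [length_Hword_seqPrefix_succ, blockStart, ← ih, Hseq_length_Hword_seqPrefix_add_one]
    cases y n <;> rfl

theorem Hpreimage_Hseq (y : ℕ → Bool) : Hpreimage (Hseq y) = y := by
  funext n
  rw [Hpreimage, ← length_Hword_seqPrefix_eq_blockStart, Hseq_length_Hword_seqPrefix_add_one,
    Bool.not_not]

theorem le_blockStart (x : ℕ → Bool) (m : ℕ) : m ≤ blockStart x m := by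
  induction m with
  | zero => rfl
  | succ n ih => rw [blockStart]; split <;> omega

section NoConsecutiveOnes

variable {x : ℕ → Bool} (h0 : x 0 = false) (h11 : ∀ i, ¬(x i = true ∧ x (i + 1) = true))
include h0 h11

theorem apply_blockStart (m : ℕ) : x (blockStart x m) = false := by
  induction m with
  | zero => exact h0
  | succ n _ =>
    rw [blockStart]
    cases hx : x (blockStart x n + 1)
    · exact hx
    · exact Bool.eq_false_iff.2 fun hx2 => h11 _ ⟨hx, hx2⟩

theorem Hword_seqPrefix_Hpreimage (m : ℕ) :
    Hword (seqPrefix (Hpreimage x) m) = seqPrefix x (blockStart x m) := by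
  induction m with
  | zero => rfl
  | succ n ih =>
    have hstart := apply_blockStart h0 h11 n
    rw [seqPrefix_succ, Hword_append, ih, blockStart, Hpreimage]
    cases hx : x (blockStart x n + 1) <;> simp [Hword, seqPrefix_succ, hstart, hx]

theorem Hseq_Hpreimage : Hseq (Hpreimage x) = x := by
  funext n
  have hn : n < blockStart x (n + 1) := (le_blockStart x (n + 1)).trans_lt' n.lt_succ_self
  rw [Hseq_eq_getD, Hword_seqPrefix_Hpreimage h0 h11, List.getD_eq_getElem _ _ (by simpa)]
  simp [seqPrefix]

end NoConsecutiveOnes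

/-- any infinite binary sequence starting with `0` and containing no two
consecutive `1`'s has a unique preimage under the Fibonacci substitution. -/
theorem unique_H_preimage (x : ℕ → Bool) (h0 : x 0 = false)
    (h11 : ∀ i, ¬(x i = true ∧ x (i + 1) = true)) :
    ∃! y : ℕ → Bool, Hseq y = x :=
  ⟨Hpreimage x, Hseq_Hpreimage h0 h11, fun y hy => hy ▸ (Hpreimage_Hseq y).symm⟩
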